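/- arXiv:1206.1379 — 5 statements merged into one kernel-verified Lean document; each statement's English description precedes it below -/
import Mathlib

section
/- Let λ > 0 and ν > 0, and let φ be a real number with cos φ = λ/√(λ² + ν²) and sin φ = ν/√(λ² + ν²). Then lim_{T→∞} [ ∫₀^T e^{2λ(t−T)} cos²(νt) dt − (1/(4λ))(1 + (λ/√(λ² + ν²)) cos(2νT − φ)) ] = 0. -/
open Filter intervalIntegral Real

lemma prim_deriv (lam ν : ℝ) (hlam : 0 < lam) (hν : 0 < ν) (t : ℝ) :
    HasDerivAt (fun t : ℝ => Real.exp (2*lam*t) *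
      (1/(4*lam) + (2*lam*Real.cos (2*ν*t) + 2*ν*Real.sin (2*ν*t))/(8*(lam^2+ν^2))))
      (Real.exp (2*lam*t) * (Real.cos (ν*t))^2) t := by
  have hs : lam^2 + ν^2 ≠ 0 := by positivity
  have hexp : HasDerivAt (fun t : ℝ => Real.exp (2*lam*t)) (Real.exp (2*lam*t) * (2*lam)) t := by
    have := ((hasDerivAt_id t).const_mul (2*lam)).exp
    simpa using this
  have hcos : HasDerivAt (fun t : ℝ => Real.cos (2*ν*t)) (-Real.sin (2*ν*t) * (2*ν)) t := by
    have := ((hasDerivAt_id t).const_mul (2*ν)).cos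
    simpa using this
  have hsin : HasDerivAt (fun t : ℝ => Real.sin (2*ν*t)) (Real.cos (2*ν*t) * (2*ν)) t := by
    have := ((hasDerivAt_id t).const_mul (2*ν)).sin
    simpa using this
  have hinner : HasDerivAt (fun t : ℝ =>
      1/(4*lam) + (2*lam*Real.cos (2*ν*t) + 2*ν*Real.sin (2*ν*t))/(8*(lam^2+ν^2)))
      ((2*lam*(-Real.sin (2*ν*t) * (2*ν)) + 2*ν*(Real.cos (2*ν*t) * (2*ν)))/(8*(lam^2+ν^2))) t := by
    exact (((hcos.const_mul (2*lam)).add (hsin.const_mul (2*ν))).div_const _).const_add _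
  have := hexp.mul hinner
  refine this.congr_deriv ?_
  have hcd := Real.cos_sq (ν*t)
  rw [show 2*(ν*t) = 2*ν*t by ring] at hcd
  rw [hcd]
  field_simp
  ring

/-- For `λ, ν > 0` and `φ` with `cos φ = λ/√(λ²+ν²)`,
`sin φ = ν/√(λ²+ν²)`,
`∫₀ᵀ e^{2λ(t−T)} cos²(νt) dt − (1/(4λ))(1 + (λ/√(λ²+ν²)) cos(2νT − φ)) → 0`
as `T → ∞`. -/
theorem sigma_c_squared_asymptotics
    (lam ν φ : ℝ) (hlam : 0 < lam) (hν : 0 < ν)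
    (hcos : Real.cos φ = lam / Real.sqrt (lam^2 + ν^2))
    (hsin : Real.sin φ = ν / Real.sqrt (lam^2 + ν^2)) :
    Tendsto
      (fun T =>
        (∫ t in (0:ℝ)..T, Real.exp (2 * lam * (t - T)) * (Real.cos (ν * t))^2) -
          (1 / (4 * lam)) *
            (1 + (lam / Real.sqrt (lam^2 + ν^2)) * Real.cos (2 * ν * T - φ)))
      atTop (nhds 0) := by
  have hs : (0:ℝ) < lam^2 + ν^2 := by positivity
  have hsqrt : Real.sqrt (lam^2+ν^2) > 0 := Real.sqrt_pos.mpr hs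
  have hsq : Real.sqrt (lam^2+ν^2) ^ 2 = lam^2+ν^2 := Real.sq_sqrt hs.le
  set C : ℝ := 1/(4*lam) + lam/(4*(lam^2+ν^2)) with hC
  have key : ∀ T : ℝ,
      (∫ t in (0:ℝ)..T, Real.exp (2 * lam * (t - T)) * (Real.cos (ν * t))^2) -
          (1 / (4 * lam)) *
            (1 + (lam / Real.sqrt (lam^2 + ν^2)) * Real.cos (2 * ν * T - φ))
        = -C * Real.exp (-(2*lam) * T) := by
    intro T
    have hint : (∫ t in (0:ℝ)..T, Real.exp (2 * lam * (t - T)) * (Real.cos (ν * t))^2)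
        = Real.exp (-(2*lam)*T) * ∫ t in (0:ℝ)..T, Real.exp (2*lam*t) * (Real.cos (ν*t))^2 := by
      rw [← intervalIntegral.integral_const_mul]
      congr 1; ext t
      rw [show 2*lam*(t-T) = -(2*lam)*T + 2*lam*t by ring, Real.exp_add, mul_assoc]
    have hFTC : (∫ t in (0:ℝ)..T, Real.exp (2*lam*t) * (Real.cos (ν*t))^2)
        = (Real.exp (2*lam*T) *
            (1/(4*lam) + (2*lam*Real.cos (2*ν*T) + 2*ν*Real.sin (2*ν*T))/(8*(lam^2+ν^2))))
          - (Real.exp (2*lam*0) *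
            (1/(4*lam) + (2*lam*Real.cos (2*ν*0) + 2*ν*Real.sin (2*ν*0))/(8*(lam^2+ν^2)))) := by
      apply intervalIntegral.integral_eq_sub_of_hasDerivAt
      · intro t _; exact prim_deriv lam ν hlam hν t
      · apply Continuous.intervalIntegrable
        continuity
    rw [hint, hFTC]
    rw [Real.cos_sub, hcos, hsin]
    rw [mul_sub, ← mul_assoc, ← Real.exp_add,
      show -(2*lam)*T + 2*lam*T = 0 by ring, Real.exp_zero]
    simp only [mul_zero, Real.cos_zero, Real.sin_zero, Real.exp_zero]
    rw [hC]
    have hne : Real.sqrt (lam^2+ν^2) ≠ 0 := ne_of_gt hsqrt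
    field_simp
    rw [hsq]; ring
  simp only [key]
  have : Tendsto (fun T : ℝ => Real.exp (-(2*lam)*T)) atTop (nhds 0) := by
    apply Real.tendsto_exp_atBot.comp
    exact Tendsto.const_mul_atTop_of_neg (by linarith : -(2*lam) < 0) tendsto_id
  have := this.const_mul (-C)
  simpa using this
end

section
/- Let λ > 0 and ν > 0, and let φ be a real number with cos φ = λ/√(λ² + ν²) and sin φ = ν/√(λ² + ν²). Then lim_{T→∞} [ ∫₀^T e^{2λ(t−T)} sin²(νt) dt − (1/(4λ))(1 − (λ/√(λ² + ν²)) cos(2νT − φ)) ] = 0. -/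
open Filter intervalIntegral Real

private lemma hasDerivAt_F (lam ν : ℝ) (hlam : 0 < lam) (hν : 0 < ν) (t : ℝ) :
    HasDerivAt (fun t => Real.exp (2*lam*t)/(4*lam) -
        Real.exp (2*lam*t)*(2*lam*Real.cos (2*ν*t) + 2*ν*Real.sin (2*ν*t))/(8*(lam^2+ν^2)))
      (Real.exp (2*lam*t) * (Real.sin (ν*t))^2) t := by
  have he : HasDerivAt (fun t => Real.exp (2*lam*t)) (2*lam*Real.exp (2*lam*t)) t := by
    simpa [mul_comm] using ((hasDerivAt_id t).const_mul (2*lam)).exp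
  have hc : HasDerivAt (fun t => Real.cos (2*ν*t)) (-(2*ν)*Real.sin (2*ν*t)) t := by
    simpa [mul_comm, mul_assoc] using ((hasDerivAt_id t).const_mul (2*ν)).cos
  have hs : HasDerivAt (fun t => Real.sin (2*ν*t)) ((2*ν)*Real.cos (2*ν*t)) t := by
    simpa [mul_comm, mul_assoc] using ((hasDerivAt_id t).const_mul (2*ν)).sin
  have h2 : HasDerivAt (fun t => 2*lam*Real.cos (2*ν*t) + 2*ν*Real.sin (2*ν*t))
      (2*lam*(-(2*ν)*Real.sin (2*ν*t)) + 2*ν*((2*ν)*Real.cos (2*ν*t))) t :=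
    (hc.const_mul (2*lam)).add (hs.const_mul (2*ν))
  have h3 := ((he.div_const (4*lam)).sub (((he.mul h2)).div_const (8*(lam^2+ν^2))))
  refine h3.congr_deriv ?_
  have hsq : Real.sin (ν*t)^2 = 1/2 - Real.cos (2*(ν*t))/2 := Real.sin_sq_eq_half_sub _
  have h2t : 2*(ν*t) = 2*ν*t := by ring
  rw [hsq, h2t]
  have hlam0 : lam ≠ 0 := ne_of_gt hlam
  have hd : lam^2 + ν^2 ≠ 0 := by positivity
  field_simp
  ring

private lemma key_eq (lam ν φ : ℝ) (hlam : 0 < lam) (hν : 0 < ν)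
    (hcos : Real.cos φ = lam / Real.sqrt (lam^2 + ν^2))
    (hsin : Real.sin φ = ν / Real.sqrt (lam^2 + ν^2)) (T : ℝ) :
    (∫ t in (0:ℝ)..T, Real.exp (2 * lam * (t - T)) * (Real.sin (ν * t))^2) -
      (1 / (4 * lam)) *
        (1 - (lam / Real.sqrt (lam^2 + ν^2)) * Real.cos (2 * ν * T - φ)) =
    (lam/(4*(lam^2+ν^2)) - 1/(4*lam)) * Real.exp (-(2*lam)*T) := by
  set s := Real.sqrt (lam^2 + ν^2) with hsdef
  have hs0 : 0 < s := Real.sqrt_pos.mpr (by positivity)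
  have hssq : s^2 = lam^2 + ν^2 := Real.sq_sqrt (by positivity)
  have hint : (∫ t in (0:ℝ)..T, Real.exp (2 * lam * (t - T)) * (Real.sin (ν * t))^2)
      = Real.exp (-(2*lam)*T) * ∫ t in (0:ℝ)..T, Real.exp (2*lam*t) * (Real.sin (ν*t))^2 := by
    rw [← intervalIntegral.integral_const_mul]
    congr 1; funext t
    have h2t : 2*lam*(t-T) = -(2*lam)*T + 2*lam*t := by ring
    rw [h2t, Real.exp_add]; ring
  have hint2 : (∫ t in (0:ℝ)..T, Real.exp (2*lam*t) * (Real.sin (ν*t))^2)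
      = (Real.exp (2*lam*T)/(4*lam) -
          Real.exp (2*lam*T)*(2*lam*Real.cos (2*ν*T) + 2*ν*Real.sin (2*ν*T))/(8*(lam^2+ν^2)))
        - (Real.exp (2*lam*0)/(4*lam) -
          Real.exp (2*lam*0)*(2*lam*Real.cos (2*ν*0) + 2*ν*Real.sin (2*ν*0))/(8*(lam^2+ν^2))) := by
    apply intervalIntegral.integral_eq_sub_of_hasDerivAt
    · intro t _
      exact hasDerivAt_F lam ν hlam hν t
    · apply Continuous.intervalIntegrable
      continuity
  rw [hint, hint2, Real.cos_sub, hcos, hsin]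
  simp only [mul_zero, Real.cos_zero, Real.sin_zero, Real.exp_zero]
  have hE : Real.exp (-(2*lam)*T) = (Real.exp (2*lam*T))⁻¹ := by
    rw [← Real.exp_neg]; ring_nf
  have hkey : (lam/s) * (Real.cos (2*ν*T) * (lam/s) + Real.sin (2*ν*T) * (ν/s))
      = lam * (lam * Real.cos (2*ν*T) + ν * Real.sin (2*ν*T)) / (lam^2 + ν^2) := by
    rw [← hssq]; ring
  rw [hkey, hE]
  have hlam0 : lam ≠ 0 := ne_of_gt hlam
  have hd : lam^2 + ν^2 ≠ 0 := by positivity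
  have hEne : Real.exp (2*lam*T) ≠ 0 := Real.exp_ne_zero _
  field_simp
  ring


/-- For `λ, ν > 0` and `φ` with `cos φ = λ/√(λ²+ν²)`,
`sin φ = ν/√(λ²+ν²)`,
`∫₀ᵀ e^{2λ(t−T)} sin²(νt) dt − (1/(4λ))(1 − (λ/√(λ²+ν²)) cos(2νT − φ)) → 0`
as `T → ∞`. -/
theorem sigma_s_squared_asymptotics
    (lam ν φ : ℝ) (hlam : 0 < lam) (hν : 0 < ν)
    (hcos : Real.cos φ = lam / Real.sqrt (lam^2 + ν^2))
    (hsin : Real.sin φ = ν / Real.sqrt (lam^2 + ν^2)) :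
    Tendsto
      (fun T =>
        (∫ t in (0:ℝ)..T, Real.exp (2 * lam * (t - T)) * (Real.sin (ν * t))^2) -
          (1 / (4 * lam)) *
            (1 - (lam / Real.sqrt (lam^2 + ν^2)) * Real.cos (2 * ν * T - φ)))
      atTop (nhds 0) := by
  have h : Tendsto (fun T => (lam/(4*(lam^2+ν^2)) - 1/(4*lam)) * Real.exp (-(2*lam)*T))
      atTop (nhds 0) := by
    have h1 : Tendsto (fun T : ℝ => -(2*lam)*T) atTop atBot :=
      tendsto_id.const_mul_atTop_of_neg (by linarith)
    have h2 := Real.tendsto_exp_atBot.comp h1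
    simpa using h2.const_mul (lam/(4*(lam^2+ν^2)) - 1/(4*lam))
  exact h.congr (fun T => (key_eq lam ν φ hlam hν hcos hsin T).symm)
end

section
/- Let λ > 0 and ν > 0, and let φ be a real number with cos φ = λ/√(λ² + ν²) and sin φ = ν/√(λ² + ν²). Then lim_{T→∞} [ ∫₀^T e^{2λ(t−T)} cos(νt) sin(νt) dt − (1/(4√(λ² + ν²))) sin(2νT − φ) ] = 0. -/
open Filter intervalIntegral Real

/-- For `λ, ν > 0` and `φ` with `cos φ = λ/√(λ²+ν²)`,
`sin φ = ν/√(λ²+ν²)`,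
`∫₀ᵀ e^{2λ(t−T)} cos(νt) sin(νt) dt − (1/(4√(λ²+ν²))) sin(2νT − φ) → 0`
as `T → ∞`. -/
theorem sigma_cs_asymptotics
    (lam ν φ : ℝ) (hlam : 0 < lam) (hν : 0 < ν)
    (hcos : Real.cos φ = lam / Real.sqrt (lam^2 + ν^2))
    (hsin : Real.sin φ = ν / Real.sqrt (lam^2 + ν^2)) :
    Tendsto
      (fun T =>
        (∫ t in (0:ℝ)..T,
            Real.exp (2 * lam * (t - T)) * Real.cos (ν * t) * Real.sin (ν * t)) -
          (1 / (4 * Real.sqrt (lam^2 + ν^2))) * Real.sin (2 * ν * T - φ))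
      atTop (nhds 0) := by
  have hsum : (0:ℝ) < lam^2 + ν^2 := by positivity
  have hs : (0:ℝ) < Real.sqrt (lam^2 + ν^2) := Real.sqrt_pos.mpr hsum
  have hs2 : Real.sqrt (lam^2 + ν^2) ^ 2 = lam^2 + ν^2 := Real.sq_sqrt hsum.le
  have key : ∀ T : ℝ,
      (∫ t in (0:ℝ)..T,
          Real.exp (2 * lam * (t - T)) * Real.cos (ν * t) * Real.sin (ν * t)) -
        (1 / (4 * Real.sqrt (lam^2 + ν^2))) * Real.sin (2 * ν * T - φ)
      = ν * Real.exp (2 * lam * (0 - T)) / (4 * (lam^2 + ν^2)) := by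
    intro T
    have hF : ∀ t : ℝ, HasDerivAt
        (fun t => Real.exp (2*lam*(t-T)) *
          (2*lam*Real.sin (2*(ν*t)) - 2*ν*Real.cos (2*(ν*t))) / (8*(lam^2+ν^2)))
        (Real.exp (2*lam*(t-T)) * Real.cos (ν*t) * Real.sin (ν*t)) t := by
      intro t
      have h1 : HasDerivAt (fun t : ℝ => Real.exp (2*lam*(t-T)))
          (Real.exp (2*lam*(t-T)) * (2*lam)) t :=
        by simpa using (((hasDerivAt_id t).sub_const T).const_mul (2*lam)).exp
      have h2 : HasDerivAt (fun t : ℝ => Real.sin (2*(ν*t)))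
          (Real.cos (2*(ν*t)) * (2*ν)) t := by
        simpa [mul_assoc] using ((hasDerivAt_id t).const_mul (2*ν)).sin
      have h3 : HasDerivAt (fun t : ℝ => Real.cos (2*(ν*t)))
          (-Real.sin (2*(ν*t)) * (2*ν)) t := by
        simpa [mul_assoc] using ((hasDerivAt_id t).const_mul (2*ν)).cos
      have := (h1.mul ((h2.const_mul (2*lam)).sub (h3.const_mul (2*ν)))).div_const
        (8*(lam^2+ν^2))
      refine this.congr_deriv ?_
      have h4 : Real.sin (2*(ν*t)) = 2 * Real.sin (ν*t) * Real.cos (ν*t) :=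
        Real.sin_two_mul _
      simp only [Pi.sub_apply]
      rw [h4]; field_simp; ring
    have hint := intervalIntegral.integral_eq_sub_of_hasDerivAt (a := (0:ℝ)) (b := T)
      (f := fun t => Real.exp (2*lam*(t-T)) *
        (2*lam*Real.sin (2*(ν*t)) - 2*ν*Real.cos (2*(ν*t))) / (8*(lam^2+ν^2)))
      (fun t _ => hF t)
      (by
        apply Continuous.intervalIntegrable
        continuity)
    rw [hint]
    rw [Real.sin_sub, hcos, hsin]
    simp only [show (2:ℝ)*(ν*T) = 2*ν*T from by ring, show (2:ℝ)*(ν*0) = 0 from by ring]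
    simp only [sub_self, mul_zero, Real.exp_zero, Real.sin_zero, Real.cos_zero, zero_sub, mul_neg]
    have hne : Real.sqrt (lam^2 + ν^2) ≠ 0 := hs.ne'
    field_simp
    linear_combination (8*(lam*Real.sin (2*ν*T) - ν*Real.cos (2*ν*T))) * hs2
  have heq : (fun T : ℝ =>
      (∫ t in (0:ℝ)..T,
          Real.exp (2 * lam * (t - T)) * Real.cos (ν * t) * Real.sin (ν * t)) -
        (1 / (4 * Real.sqrt (lam^2 + ν^2))) * Real.sin (2 * ν * T - φ))
      = fun T => ν * Real.exp (2 * lam * (0 - T)) / (4 * (lam^2 + ν^2)) :=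
    funext key
  rw [heq]
  have h0 : Tendsto (fun T : ℝ => 2*lam*(0-T)) atTop atBot := by
    have h1 : Tendsto (fun T : ℝ => (2*lam)*T) atTop atTop :=
      Tendsto.const_mul_atTop (by positivity) tendsto_id
    have h2 := tendsto_neg_atTop_atBot.comp h1
    have : (fun T : ℝ => 2*lam*(0-T)) = fun T => -((2*lam)*T) := by
      funext T; ring
    rw [this]; exact h2
  have hexp : Tendsto (fun T : ℝ => Real.exp (2*lam*(0-T))) atTop (nhds 0) :=
    Real.tendsto_exp_atBot.comp h0
  have := (hexp.const_mul ν).div_const (4*(lam^2+ν^2))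
  simpa using this
end

section
/- Let q > 0. Then lim_{T→∞} e^{−4qT} [ (∫₀^T t² e^{2qt} dt)(∫₀^T e^{2qt} dt) − (∫₀^T t e^{2qt} dt)² ] = 1/(16q⁴). -/
open Filter intervalIntegral

lemma ftc_aux (F f : ℝ → ℝ) (T : ℝ)
    (hd : ∀ t, HasDerivAt F (f t) t) (hc : Continuous f) :
    ∫ t in (0:ℝ)..T, f t = F T - F 0 :=
  intervalIntegral.integral_eq_sub_of_hasDerivAt (fun t _ => hd t)
    (hc.intervalIntegrable 0 T)

lemma int0 (a T : ℝ) (ha : a ≠ 0) :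
    ∫ t in (0:ℝ)..T, Real.exp (a * t) = (Real.exp (a * T) - 1) / a := by
  have h := ftc_aux (fun t => Real.exp (a * t) / a) (fun t => Real.exp (a * t)) T
    (fun t => by
      have := (((hasDerivAt_id t).const_mul a).exp).div_const a
      simpa [mul_comm, mul_div_assoc, mul_div_cancel_right₀, ha] using this)
    (by continuity)
  rw [h]; simp [sub_div]

lemma int1 (a T : ℝ) (ha : a ≠ 0) :
    ∫ t in (0:ℝ)..T, t * Real.exp (a * t)
      = ((a * T - 1) * Real.exp (a * T) + 1) / a ^ 2 := by
  have h := ftc_aux (fun t => (a * t - 1) * Real.exp (a * t) / a ^ 2)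
    (fun t => t * Real.exp (a * t)) T
    (fun t => by
      have h1 : HasDerivAt (fun t : ℝ => (a * t - 1) * Real.exp (a * t))
          (a * Real.exp (a * t) + (a * t - 1) * (Real.exp (a * t) * a)) t := by
        simpa using (((hasDerivAt_id t).const_mul a).sub_const 1).fun_mul
          ((hasDerivAt_id t).const_mul a).exp
      have := h1.div_const (a ^ 2)
      convert this using 1
      · rfl
      · rfl
      field_simp
      ring)
    (by continuity)
  rw [h]; simp; ring

lemma int2 (a T : ℝ) (ha : a ≠ 0) :
    ∫ t in (0:ℝ)..T, t ^ 2 * Real.exp (a * t)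
      = ((a ^ 2 * T ^ 2 - 2 * a * T + 2) * Real.exp (a * T) - 2) / a ^ 3 := by
  have h := ftc_aux
    (fun t => (a ^ 2 * t ^ 2 - 2 * a * t + 2) * Real.exp (a * t) / a ^ 3)
    (fun t => t ^ 2 * Real.exp (a * t)) T
    (fun t => by
      have h1 : HasDerivAt (fun t : ℝ => a ^ 2 * t ^ 2 - 2 * a * t + 2)
          (a ^ 2 * (2 * t) - 2 * a) t := by
        have := (((hasDerivAt_pow 2 t).const_mul (a ^ 2)).sub
          ((hasDerivAt_id t).const_mul (2 * a))).add_const 2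
        simpa using this
      have h2 := (h1.fun_mul ((hasDerivAt_id t).const_mul a).exp).div_const (a ^ 3)
      convert h2 using 1
      · rfl
      · rfl
      · rfl
      simp only [id]
      field_simp
      ring)
    (by continuity)
  rw [h]; simp; ring

/-- For `q > 0`,
`e^{−4qT}[(∫₀ᵀ t²e^{2qt} dt)(∫₀ᵀ e^{2qt} dt) − (∫₀ᵀ te^{2qt} dt)²] → 1/(16q⁴)`
as `T → ∞`. -/
theorem gram_det_positive_double_root (q : ℝ) (hq : 0 < q) :
    Tendsto
      (fun T => Real.exp (-4 * q * T) *
        ((∫ t in (0:ℝ)..T, t^2 * Real.exp (2 * q * t)) *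
            (∫ t in (0:ℝ)..T, Real.exp (2 * q * t)) -
          (∫ t in (0:ℝ)..T, t * Real.exp (2 * q * t))^2))
      atTop (nhds (1 / (16 * q^4))) := by
  set a : ℝ := 2 * q with ha_def
  have ha : a ≠ 0 := by positivity
  have ha' : (0:ℝ) < a := by positivity
  have key : ∀ T : ℝ,
      Real.exp (-4 * q * T) *
        ((∫ t in (0:ℝ)..T, t^2 * Real.exp (2 * q * t)) *
            (∫ t in (0:ℝ)..T, Real.exp (2 * q * t)) -
          (∫ t in (0:ℝ)..T, t * Real.exp (2 * q * t))^2)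
      = (1 - (a ^ 2 * T ^ 2 + 2) * Real.exp (-(a * T))
          + Real.exp (-(a * T)) ^ 2) / a ^ 4 := by
    intro T
    rw [int0 a T ha, int1 a T ha, int2 a T ha]
    have hE : Real.exp (-4 * q * T) = (Real.exp (a * T))⁻¹ ^ 2 := by
      rw [← Real.exp_neg, ← Real.exp_nat_mul, ha_def]
      ring_nf
    have hI : Real.exp (-(a * T)) = (Real.exp (a * T))⁻¹ := Real.exp_neg _
    rw [hE, hI]
    have hEpos : Real.exp (a * T) ≠ 0 := (Real.exp_pos _).ne'
    field_simp
    ring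
  rw [show (1 : ℝ) / (16 * q ^ 4) = (1 - 0 + 0) / a ^ 4 by
    rw [ha_def]; ring_nf]
  refine Tendsto.congr (fun T => (key T).symm) ?_
  refine Tendsto.div_const ?_ _
  have hcomp : Tendsto (fun T : ℝ => a * T) atTop atTop :=
    Tendsto.const_mul_atTop ha' tendsto_id
  have hg : Tendsto (fun x : ℝ => (x ^ 2 + 2) * Real.exp (-x)) atTop (nhds 0) := by
    have := (Real.tendsto_pow_mul_exp_neg_atTop_nhds_zero 2).add
      (tendsto_const_nhds.mul (Real.tendsto_exp_neg_atTop_nhds_zero) :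
        Tendsto (fun x : ℝ => 2 * Real.exp (-x)) atTop (nhds (2 * 0)))
    simpa [add_mul, mul_comm] using this
  have h1 : Tendsto (fun T : ℝ => (a ^ 2 * T ^ 2 + 2) * Real.exp (-(a * T)))
      atTop (nhds 0) := by
    have := hg.comp hcomp
    refine this.congr (fun T => ?_)
    simp [Function.comp]
    ring_nf
  have h2 : Tendsto (fun T : ℝ => Real.exp (-(a * T)) ^ 2) atTop (nhds 0) := by
    have := (Real.tendsto_exp_neg_atTop_nhds_zero.comp hcomp).pow 2
    simpa [Function.comp] using this
  simpa using (tendsto_const_nhds.sub h1).add h2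
end

section
/- Let λ > 0 and ν > 0. Then lim_{T→∞} e^{−4λT} [ (∫₀^T e^{2λt} cos²(νt) dt)(∫₀^T e^{2λt} sin²(νt) dt) − (∫₀^T e^{2λt} cos(νt) sin(νt) dt)² ] = ν²/(16λ²(λ² + ν²)). -/
open Filter intervalIntegral

lemma aux_exp (a t : ℝ) : HasDerivAt (fun t => Real.exp (a*t)) (Real.exp (a*t) * a) t := by
  have h1 : HasDerivAt (fun t : ℝ => a * t) a t := by
    simpa using (hasDerivAt_id t).const_mul a
  exact h1.exp

lemma alg_key (a b E c s : ℝ) (ha : a ≠ 0) (hE : E ≠ 0) (h : s^2 + c^2 = 1) :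
    (E⁻¹)^2 * (((E-1)/(2*a) + (E*(a*c+b*s) - a)/(a^2+b^2)/2)
        * ((E-1)/(2*a) - (E*(a*c+b*s) - a)/(a^2+b^2)/2)
      - ((E*(a*s-b*c) + b)/(a^2+b^2)/2)^2)
    = ((1-E⁻¹)^2/a^2 - (1 - 2*(E⁻¹*c) + (E⁻¹)^2)/(a^2+b^2))/4 := by
  have key : (E*(a*c+b*s) - a)^2 + (E*(a*s-b*c)+b)^2 = (E^2 - 2*E*c + 1)*(a^2+b^2) := by
    linear_combination (E^2*(a^2+b^2)) * h
  field_simp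
  linear_combination (E^2) * key - (E^4*a^2 + E^4*b^2 + 4*E^2*a^2*b^2 + 4*E^2*a^4) * h

lemma dF1 (lam ν t : ℝ) (hlam : (2:ℝ)*lam ≠ 0) (hd : (2*lam)^2+(2*ν)^2 ≠ 0) :
    HasDerivAt (fun t => (Real.exp (2*lam*t) - 1)/(2*(2*lam)) +
      (Real.exp (2*lam*t)*((2*lam)*Real.cos (2*ν*t)+(2*ν)*Real.sin (2*ν*t)) - (2*lam))
        /((2*lam)^2+(2*ν)^2)/2)
      (Real.exp (2*lam*t) * (Real.cos (ν*t))^2) t := by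
  have h2 : HasDerivAt (fun t : ℝ => 2*ν * t) (2*ν) t := by
    simpa using (hasDerivAt_id t).const_mul (2*ν)
  have h := (((aux_exp (2*lam) t).sub_const 1).div_const (2*(2*lam))).add
    (((((aux_exp (2*lam) t).mul
      ((h2.cos.const_mul (2*lam)).add (h2.sin.const_mul (2*ν)))).sub_const (2*lam)).div_const
        ((2*lam)^2+(2*ν)^2)).div_const 2)
  convert h using 1
  · rfl
  · rfl
  · rfl
  rw [Real.cos_sq]
  have hx : 2*(ν*t) = 2*ν*t := by ring
  rw [hx]
  simp only [Pi.add_apply, Pi.sub_apply]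
  have hl0 : lam ≠ 0 := by rintro rfl; simp at hlam
  field_simp
  ring

lemma dF2 (lam ν t : ℝ) (hlam : (2:ℝ)*lam ≠ 0) (hd : (2*lam)^2+(2*ν)^2 ≠ 0) :
    HasDerivAt (fun t => (Real.exp (2*lam*t) - 1)/(2*(2*lam)) -
      (Real.exp (2*lam*t)*((2*lam)*Real.cos (2*ν*t)+(2*ν)*Real.sin (2*ν*t)) - (2*lam))
        /((2*lam)^2+(2*ν)^2)/2)
      (Real.exp (2*lam*t) * (Real.sin (ν*t))^2) t := by
  have h2 : HasDerivAt (fun t : ℝ => 2*ν * t) (2*ν) t := by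
    simpa using (hasDerivAt_id t).const_mul (2*ν)
  have h := (((aux_exp (2*lam) t).sub_const 1).div_const (2*(2*lam))).sub
    (((((aux_exp (2*lam) t).mul
      ((h2.cos.const_mul (2*lam)).add (h2.sin.const_mul (2*ν)))).sub_const (2*lam)).div_const
        ((2*lam)^2+(2*ν)^2)).div_const 2)
  convert h using 1
  · rfl
  · rfl
  · rfl
  rw [Real.sin_sq, Real.cos_sq]
  have hx : 2*(ν*t) = 2*ν*t := by ring
  rw [hx]
  simp only [Pi.add_apply, Pi.sub_apply]
  have hl0 : lam ≠ 0 := by rintro rfl; simp at hlam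
  field_simp
  ring

lemma dF3 (lam ν t : ℝ) (hlam : (2:ℝ)*lam ≠ 0) (hd : (2*lam)^2+(2*ν)^2 ≠ 0) :
    HasDerivAt (fun t =>
      (Real.exp (2*lam*t)*((2*lam)*Real.sin (2*ν*t)-(2*ν)*Real.cos (2*ν*t)) + (2*ν))
        /((2*lam)^2+(2*ν)^2)/2)
      (Real.exp (2*lam*t) * Real.cos (ν*t) * Real.sin (ν*t)) t := by
  have h2 : HasDerivAt (fun t : ℝ => 2*ν * t) (2*ν) t := by
    simpa using (hasDerivAt_id t).const_mul (2*ν)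
  have h := ((((aux_exp (2*lam) t).mul
      ((h2.sin.const_mul (2*lam)).sub (h2.cos.const_mul (2*ν)))).add_const (2*ν)).div_const
        ((2*lam)^2+(2*ν)^2)).div_const 2
  convert h using 1
  · rfl
  · rfl
  · rfl
  have hx : Real.cos (ν*t) * Real.sin (ν*t) = Real.sin (2*ν*t)/2 := by
    rw [show (2*ν*t) = 2*(ν*t) by ring, Real.sin_two_mul]; ring
  rw [mul_assoc, hx]
  simp only [Pi.add_apply, Pi.sub_apply]
  have hl0 : lam ≠ 0 := by rintro rfl; simp at hlam
  field_simp
  ring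

/-- For `λ > 0`, `ν > 0`,
`e^{−4λT}[(∫₀ᵀ e^{2λt} cos²(νt) dt)(∫₀ᵀ e^{2λt} sin²(νt) dt)
  − (∫₀ᵀ e^{2λt} cos(νt) sin(νt) dt)²] → ν²/(16λ²(λ² + ν²))` as `T → ∞`. -/
theorem gram_det_complex_roots (lam ν : ℝ) (hlam : 0 < lam) (hν : 0 < ν) :
    Tendsto
      (fun T => Real.exp (-4 * lam * T) *
        ((∫ t in (0:ℝ)..T, Real.exp (2 * lam * t) * (Real.cos (ν * t))^2) *
            (∫ t in (0:ℝ)..T, Real.exp (2 * lam * t) * (Real.sin (ν * t))^2) -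
          (∫ t in (0:ℝ)..T,
              Real.exp (2 * lam * t) * Real.cos (ν * t) * Real.sin (ν * t))^2))
      atTop (nhds (ν^2 / (16 * lam^2 * (lam^2 + ν^2)))) := by
  have hlam' : (2:ℝ)*lam ≠ 0 := by positivity
  have hd : (2*lam)^2+(2*ν)^2 ≠ 0 := by positivity
  have e1 : ∀ T : ℝ, (∫ t in (0:ℝ)..T, Real.exp (2 * lam * t) * (Real.cos (ν * t))^2)
      = (Real.exp (2*lam*T) - 1)/(2*(2*lam)) +
        (Real.exp (2*lam*T)*((2*lam)*Real.cos (2*ν*T)+(2*ν)*Real.sin (2*ν*T)) - (2*lam))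
          /((2*lam)^2+(2*ν)^2)/2 := by
    intro T
    rw [intervalIntegral.integral_eq_sub_of_hasDerivAt
      (fun t _ => dF1 lam ν t hlam' hd) (Continuous.intervalIntegrable (by fun_prop) 0 T)]
    norm_num
  have e2 : ∀ T : ℝ, (∫ t in (0:ℝ)..T, Real.exp (2 * lam * t) * (Real.sin (ν * t))^2)
      = (Real.exp (2*lam*T) - 1)/(2*(2*lam)) -
        (Real.exp (2*lam*T)*((2*lam)*Real.cos (2*ν*T)+(2*ν)*Real.sin (2*ν*T)) - (2*lam))
          /((2*lam)^2+(2*ν)^2)/2 := by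
    intro T
    rw [intervalIntegral.integral_eq_sub_of_hasDerivAt
      (fun t _ => dF2 lam ν t hlam' hd) (Continuous.intervalIntegrable (by fun_prop) 0 T)]
    norm_num
  have e3 : ∀ T : ℝ, (∫ t in (0:ℝ)..T,
        Real.exp (2 * lam * t) * Real.cos (ν * t) * Real.sin (ν * t))
      = (Real.exp (2*lam*T)*((2*lam)*Real.sin (2*ν*T)-(2*ν)*Real.cos (2*ν*T)) + (2*ν))
          /((2*lam)^2+(2*ν)^2)/2 := by
    intro T
    rw [intervalIntegral.integral_eq_sub_of_hasDerivAt
      (fun t _ => dF3 lam ν t hlam' hd) (Continuous.intervalIntegrable (by fun_prop) 0 T)]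
    norm_num
  have hpt : ∀ T : ℝ, Real.exp (-4 * lam * T) *
        ((∫ t in (0:ℝ)..T, Real.exp (2 * lam * t) * (Real.cos (ν * t))^2) *
            (∫ t in (0:ℝ)..T, Real.exp (2 * lam * t) * (Real.sin (ν * t))^2) -
          (∫ t in (0:ℝ)..T,
              Real.exp (2 * lam * t) * Real.cos (ν * t) * Real.sin (ν * t))^2)
      = ((1-(Real.exp (2*lam*T))⁻¹)^2/(2*lam)^2
          - (1 - 2*((Real.exp (2*lam*T))⁻¹*Real.cos (2*ν*T)) + ((Real.exp (2*lam*T))⁻¹)^2)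
            /((2*lam)^2+(2*ν)^2))/4 := by
    intro T
    rw [e1 T, e2 T, e3 T]
    have hX : Real.exp (-4 * lam * T) = ((Real.exp (2*lam*T))⁻¹)^2 := by
      rw [sq, ← Real.exp_neg, ← Real.exp_add]
      ring_nf
    rw [hX]
    exact alg_key (2*lam) (2*ν) (Real.exp (2*lam*T)) (Real.cos (2*ν*T)) (Real.sin (2*ν*T))
      hlam' (Real.exp_ne_zero _) (Real.sin_sq_add_cos_sq _)
  refine Tendsto.congr (fun T => (hpt T).symm) ?_
  have hinv : Tendsto (fun T : ℝ => (Real.exp (2*lam*T))⁻¹) atTop (nhds 0) := by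
    have ht : Tendsto (fun T : ℝ => 2*lam*T) atTop atTop := by
      apply Tendsto.const_mul_atTop (by positivity : (0:ℝ) < 2*lam) tendsto_id
    exact (Real.tendsto_exp_atTop.comp ht).inv_tendsto_atTop
  have hcos : Tendsto (fun T : ℝ => (Real.exp (2*lam*T))⁻¹ * Real.cos (2*ν*T))
      atTop (nhds 0) := by
    refine squeeze_zero_norm (fun T => ?_) hinv
    rw [Real.norm_eq_abs, abs_mul, abs_of_pos (by positivity)]
    exact mul_le_of_le_one_right (by positivity) (Real.abs_cos_le_one _)
  have hg : Tendsto (fun T : ℝ =>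
      ((1-(Real.exp (2*lam*T))⁻¹)^2/(2*lam)^2
          - (1 - 2*((Real.exp (2*lam*T))⁻¹*Real.cos (2*ν*T)) + ((Real.exp (2*lam*T))⁻¹)^2)
            /((2*lam)^2+(2*ν)^2))/4) atTop
      (nhds ((((1:ℝ)-0)^2/(2*lam)^2 - (1 - 2*(0:ℝ) + (0:ℝ)^2)/((2*lam)^2+(2*ν)^2))/4)) := by
    apply Tendsto.div_const
    exact (((tendsto_const_nhds.sub hinv).pow 2).div_const _).sub
      (((tendsto_const_nhds.sub (hcos.const_mul 2)).add (hinv.pow 2)).div_const _)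
  convert hg using 2
  have hl : lam ≠ 0 := ne_of_gt hlam
  have hd2 : lam^2 + ν^2 ≠ 0 := by positivity
  field_simp
  ring
end
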